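/- arXiv:1211.0507 — 5 statements merged into one kernel-verified Lean document; each statement's English description precedes it below -/
import Mathlib

section
/- Let μ⁺, μ⁻ : P(J) → [0,1] satisfy the boundary and monotonicity conditions. Then Ch^{B+}(x,μ⁺) = Ch^{B−}(−x,μ⁻) for all x ∈ [−1,1]^n if and only if μ⁺(C,D) = μ⁻(D,C) for every (C,D) ∈ P(J). -/
/-- The bipolar Choquet integral of `x` with respect to `μ`:
`∫₀¹ μ({j : x j > t}, {j : x j < -t}) dt`. The same formula is used for
`Ch^B`, `Ch^{B+}` and `Ch^{B-}` (with `μ̂`, `μ⁺`, `μ⁻` respectively). -/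
noncomputable def ChB {n : ℕ} (μ : Finset (Fin n) → Finset (Fin n) → ℝ)
    (x : Fin n → ℝ) : ℝ :=
  ∫ t in (0:ℝ)..1,
    μ (Finset.univ.filter (fun j => t < x j)) (Finset.univ.filter (fun j => x j < -t))

/-!
Reflecting `x ↦ -x` exchanges the two level sets `{x > t}` and `{x < -t}`, so
`Ch^{B-}(-x, μ⁻)` is the bipolar Choquet integral of `x` for the swapped capacity
`(C, D) ↦ μ⁻(D, C)`. For `t ≥ 0` these level sets are disjoint, so the identity of the
capacities on `P(J)` gives the identity of the integrals; conversely, the integral of the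
ternary vector `1_C - 1_D` recovers the value of the capacity at `(C, D)`.
-/

section

variable {n : ℕ}

theorem ChB_neg (μ : Finset (Fin n) → Finset (Fin n) → ℝ) (x : Fin n → ℝ) :
    ChB μ (-x) = ChB (fun C D => μ D C) x := by
  unfold ChB
  congr 1 with t
  congr 1 <;> ext j <;> simp only [Finset.mem_filter_univ, Pi.neg_apply]
  · exact lt_neg
  · exact neg_lt_neg_iff

theorem ChB_congr_of_disjoint {μ ν : Finset (Fin n) → Finset (Fin n) → ℝ}
    (h : ∀ C D : Finset (Fin n), Disjoint C D → μ C D = ν C D) (x : Fin n → ℝ) :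
    ChB μ x = ChB ν x := by
  refine intervalIntegral.integral_congr fun t ht => h _ _ ?_
  rw [Set.uIcc_of_le zero_le_one] at ht
  refine Finset.disjoint_filter.mpr fun j _ hpos hneg => ?_
  linarith [ht.1]

def signVec (C D : Finset (Fin n)) : Fin n → ℝ :=
  fun j => if j ∈ C then 1 else if j ∈ D then -1 else 0

theorem signVec_mem_Icc (C D : Finset (Fin n)) (j : Fin n) :
    signVec C D j ∈ Set.Icc (-1 : ℝ) 1 := by
  unfold signVec
  split_ifs <;> norm_num

theorem filter_lt_signVec {C D : Finset (Fin n)} {t : ℝ} (ht : t ∈ Set.Ioo (0 : ℝ) 1) :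
    Finset.univ.filter (fun j => t < signVec C D j) = C := by
  ext j
  rw [Finset.mem_filter_univ, signVec]
  split_ifs with hC hD
  · simpa [hC] using ht.2
  · simp only [hC, iff_false, not_lt]; linarith [ht.1]
  · simp only [hC, iff_false, not_lt]; exact ht.1.le

theorem filter_signVec_lt {C D : Finset (Fin n)} (hCD : Disjoint C D) {t : ℝ}
    (ht : t ∈ Set.Ioo (0 : ℝ) 1) :
    Finset.univ.filter (fun j => signVec C D j < -t) = D := by
  ext j
  rw [Finset.mem_filter_univ, signVec]
  split_ifs with hC hD
  · simp only [Finset.disjoint_left.mp hCD hC, iff_false, not_lt]; linarith [ht.1]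
  · simpa [hD] using ht.2
  · simp only [hD, iff_false, not_lt]; linarith [ht.1]

theorem ChB_signVec {C D : Finset (Fin n)} (hCD : Disjoint C D)
    (μ : Finset (Fin n) → Finset (Fin n) → ℝ) :
    ChB μ (signVec C D) = μ C D := by
  unfold ChB
  rw [intervalIntegral.integral_congr_Ioo_of_le zero_le_one
    (g := fun _ => μ C D) fun t ht => by
      simp only [filter_lt_signVec ht, filter_signVec_lt hCD ht]]
  simp

end

theorem stmt_5_general {n : ℕ}
    (μp μm : Finset (Fin n) → Finset (Fin n) → ℝ) :
    (∀ x : Fin n → ℝ, (∀ j, x j ∈ Set.Icc (-1:ℝ) 1) →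
        ChB μp x = ChB μm (-x)) ↔
    (∀ C D : Finset (Fin n), Disjoint C D → μp C D = μm D C) := by
  simp only [ChB_neg]
  constructor
  · intro h C D hCD
    simpa only [ChB_signVec hCD] using h (signVec C D) (signVec_mem_Icc C D)
  · exact fun h x _ => ChB_congr_of_disjoint h x

theorem stmt_5 {n : ℕ} (hn : 1 ≤ n)
    (μp μm : Finset (Fin n) → Finset (Fin n) → ℝ)
    (hprange : ∀ C D : Finset (Fin n), Disjoint C D → μp C D ∈ Set.Icc (0:ℝ) 1)
    (hmrange : ∀ C D : Finset (Fin n), Disjoint C D → μm C D ∈ Set.Icc (0:ℝ) 1)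
    (hpb1 : μp Finset.univ ∅ = 1) (hpb2 : ∀ B : Finset (Fin n), μp ∅ B = 0)
    (hmb1 : μm ∅ Finset.univ = 1) (hmb2 : ∀ B : Finset (Fin n), μm B ∅ = 0)
    (hpmono : ∀ C D E F : Finset (Fin n), Disjoint C D → Disjoint E F →
        C ⊆ E → F ⊆ D → μp C D ≤ μp E F)
    (hmmono : ∀ C D E F : Finset (Fin n), Disjoint C D → Disjoint E F →
        E ⊆ C → D ⊆ F → μm C D ≤ μm E F) :
    (∀ x : Fin n → ℝ, (∀ j, x j ∈ Set.Icc (-1:ℝ) 1) →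
        ChB μp x = ChB μm (-x)) ↔
    (∀ C D : Finset (Fin n), Disjoint C D → μp C D = μm D C) :=
  stmt_5_general μp μm
end

section
/- Let μ⁺, μ⁻ : P(J) → [0,1] satisfy the boundary and monotonicity conditions and let μ̂(C,D) = μ⁺(C,D) − μ⁻(C,D) for all (C,D) ∈ P(J). If μ⁺(C,D) = μ⁻(D,C) for every (C,D) ∈ P(J), then Ch^B(x,μ̂) = −Ch^B(−x,μ̂) for all x ∈ [−1,1]^n. -/
/-! Replacing `x` by `-x` swaps the two level sets `{x > t}` and `{x < -t}`, which are disjoint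
for `t ≥ 0`; the symmetry `μ⁺(C,D) = μ⁻(D,C)` makes `μ̂` antisymmetric under this swap, so the
integrands at `x` and `-x` are opposite. -/

open Finset

lemma disjoint_filter_neg_lt_filter_lt {n : ℕ} (x : Fin n → ℝ) {t : ℝ} (ht : 0 ≤ t) :
    Disjoint (univ.filter fun j => x j < -t) (univ.filter fun j => t < x j) := by
  rw [disjoint_filter]
  intro j _ hlt hgt
  linarith

lemma ChB_neg_of_antisymm {n : ℕ} {μ : Finset (Fin n) → Finset (Fin n) → ℝ}
    (hμ : ∀ C D : Finset (Fin n), Disjoint C D → μ C D = -μ D C) (x : Fin n → ℝ) :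
    ChB μ (-x) = -ChB μ x := by
  unfold ChB
  rw [← intervalIntegral.integral_neg]
  refine intervalIntegral.integral_congr fun t ht => ?_
  rw [Set.uIcc_of_le zero_le_one] at ht
  simp only [Pi.neg_apply, lt_neg, neg_lt_neg_iff]
  exact hμ _ _ (disjoint_filter_neg_lt_filter_lt x ht.1)

theorem stmt_6_general {n : ℕ}
    (μp μm : Finset (Fin n) → Finset (Fin n) → ℝ)
    (hatμ : Finset (Fin n) → Finset (Fin n) → ℝ)
    (hdef : ∀ C D : Finset (Fin n), Disjoint C D → hatμ C D = μp C D - μm C D)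
    (hsym : ∀ C D : Finset (Fin n), Disjoint C D → μp C D = μm D C) :
    ∀ x : Fin n → ℝ, (∀ j, x j ∈ Set.Icc (-1:ℝ) 1) →
      ChB hatμ x = -ChB hatμ (-x) := by
  intro x _
  have hantisymm : ∀ C D : Finset (Fin n), Disjoint C D → hatμ C D = -hatμ D C := by
    intro C D h
    rw [hdef C D h, hdef D C h.symm, hsym C D h, hsym D C h.symm]
    ring
  rw [ChB_neg_of_antisymm hantisymm, neg_neg]

theorem stmt_6 {n : ℕ} (hn : 1 ≤ n)
    (μp μm : Finset (Fin n) → Finset (Fin n) → ℝ)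
    (hprange : ∀ C D : Finset (Fin n), Disjoint C D → μp C D ∈ Set.Icc (0:ℝ) 1)
    (hmrange : ∀ C D : Finset (Fin n), Disjoint C D → μm C D ∈ Set.Icc (0:ℝ) 1)
    (hpb1 : μp Finset.univ ∅ = 1) (hpb2 : ∀ B : Finset (Fin n), μp ∅ B = 0)
    (hmb1 : μm ∅ Finset.univ = 1) (hmb2 : ∀ B : Finset (Fin n), μm B ∅ = 0)
    (hpmono : ∀ C D E F : Finset (Fin n), Disjoint C D → Disjoint E F →
        C ⊆ E → F ⊆ D → μp C D ≤ μp E F)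
    (hmmono : ∀ C D E F : Finset (Fin n), Disjoint C D → Disjoint E F →
        E ⊆ C → D ⊆ F → μm C D ≤ μm E F)
    (hatμ : Finset (Fin n) → Finset (Fin n) → ℝ)
    (hdef : ∀ C D : Finset (Fin n), Disjoint C D → hatμ C D = μp C D - μm C D)
    (hsym : ∀ C D : Finset (Fin n), Disjoint C D → μp C D = μm D C) :
    ∀ x : Fin n → ℝ, (∀ j, x j ∈ Set.Icc (-1:ℝ) 1) →
      ChB hatμ x = -ChB hatμ (-x) :=
  stmt_6_general μp μm hatμ hdef hsym
end

section
/- Let μ⁺, μ⁻ be given by a 2-additive decomposition. Then Ch^{B+}(x,μ⁺) = Ch^{B−}(−x,μ⁻) for all x ∈ [−1,1]^n if and only if: (1) a_j⁺ = a_j⁻ for every j ∈ J; (2) a_{jk}⁺ = a_{jk}⁻ for every unordered pair {j,k} ⊆ J; and (3) a⁺_{j|k} = a⁻_{k|j} for every ordered pair (j,k) with j ≠ k. -/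
/-- Sum of a symmetric coefficient family over the unordered pairs `{j,k} ⊆ C`, `j ≠ k`. -/
noncomputable def pairSum {n : ℕ} (a : Fin n → Fin n → ℝ) (C : Finset (Fin n)) : ℝ :=
  (∑ p ∈ C.offDiag, a p.1 p.2) / 2

/-- `μ⁺(C,D) = Σ_{j∈C} a_j⁺ + Σ_{{j,k}⊆C} a_{jk}⁺ + Σ_{j∈C,k∈D} a⁺_{j|k}`. -/
noncomputable def muPlus {n : ℕ} (ap : Fin n → ℝ) (aps apo : Fin n → Fin n → ℝ)
    (C D : Finset (Fin n)) : ℝ :=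
  ∑ j ∈ C, ap j + pairSum aps C + ∑ j ∈ C, ∑ k ∈ D, apo j k

/-- `μ⁻(C,D) = Σ_{j∈D} a_j⁻ + Σ_{{j,k}⊆D} a_{jk}⁻ + Σ_{j∈C,k∈D} a⁻_{j|k}`. -/
noncomputable def muMinus {n : ℕ} (am : Fin n → ℝ) (ams amo : Fin n → Fin n → ℝ)
    (C D : Finset (Fin n)) : ℝ :=
  ∑ j ∈ D, am j + pairSum ams D + ∑ j ∈ C, ∑ k ∈ D, amo j k

section ChoquetIntegral

variable {n : ℕ}

def signedIndicator (C D : Finset (Fin n)) (j : Fin n) : ℝ :=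
  if j ∈ C then 1 else if j ∈ D then -1 else 0

theorem signedIndicator_mem_Icc (C D : Finset (Fin n)) (j : Fin n) :
    signedIndicator C D j ∈ Set.Icc (-1 : ℝ) 1 := by
  unfold signedIndicator
  split_ifs <;> norm_num

theorem ChB_signedIndicator (μ : Finset (Fin n) → Finset (Fin n) → ℝ) {C D : Finset (Fin n)}
    (hCD : Disjoint C D) : ChB μ (signedIndicator C D) = μ C D := by
  have hlevel : ∀ t ∈ Set.Ioo (0 : ℝ) 1,
      Finset.univ.filter (fun j => t < signedIndicator C D j) = C ∧
      Finset.univ.filter (fun j => signedIndicator C D j < -t) = D := by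
    rintro t ⟨ht0, ht1⟩
    have hmem : ∀ j, (t < signedIndicator C D j ↔ j ∈ C) ∧
        (signedIndicator C D j < -t ↔ j ∈ D) := by
      intro j
      unfold signedIndicator
      split_ifs with hC hD
      · simp only [ht1, hC, Finset.disjoint_left.mp hCD hC, iff_false, not_lt, true_and]
        linarith
      · simp only [hC, iff_false, not_lt, neg_lt_neg_iff, hD, iff_true]
        constructor <;> linarith
      · simp only [hC, iff_false, not_lt, Left.neg_pos_iff, hD, and_self]
        linarith
    constructor <;> ext j <;> simp [hmem]
  rw [ChB, intervalIntegral.integral_of_le zero_le_one,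
    MeasureTheory.integral_Ioc_eq_integral_Ioo,
    MeasureTheory.setIntegral_congr_fun measurableSet_Ioo (g := fun _ => μ C D)
      (fun t ht => by rw [(hlevel t ht).1, (hlevel t ht).2])]
  simp

theorem ChB_eq_ChB_iff (μ ν : Finset (Fin n) → Finset (Fin n) → ℝ) :
    (∀ x : Fin n → ℝ, (∀ j, x j ∈ Set.Icc (-1:ℝ) 1) → ChB μ x = ChB ν x) ↔
      ∀ C D, Disjoint C D → μ C D = ν C D := by
  constructor
  · intro h C D hCD
    rw [← ChB_signedIndicator μ hCD, ← ChB_signedIndicator ν hCD]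
    exact h _ (signedIndicator_mem_Icc C D)
  · intro h x _
    refine intervalIntegral.integral_congr fun t ht => h _ _ ?_
    have ht0 : 0 ≤ t := (Set.uIcc_of_le (zero_le_one' ℝ) ▸ ht).1
    rw [Finset.disjoint_filter]
    intro j _ hpos hneg
    linarith

end ChoquetIntegral

section TwoAdditive

variable {n : ℕ}

theorem pairSum_congr {a b : Fin n → Fin n → ℝ} (h : ∀ j k, j ≠ k → a j k = b j k)
    (C : Finset (Fin n)) : pairSum a C = pairSum b C := by
  unfold pairSum
  congr 1
  exact Finset.sum_congr rfl fun p hp => h p.1 p.2 (Finset.mem_offDiag.mp hp).2.2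

theorem pairSum_singleton (a : Fin n → Fin n → ℝ) (j : Fin n) : pairSum a {j} = 0 := by
  simp [pairSum]

theorem pairSum_pair (a : Fin n → Fin n → ℝ) {j k : Fin n} (h : j ≠ k) :
    pairSum a {j, k} = (a j k + a k j) / 2 := by
  have hoffDiag : ({j, k} : Finset (Fin n)).offDiag = {(j, k), (k, j)} := by
    ext ⟨p, q⟩
    simp only [Finset.mem_offDiag, Finset.mem_insert, Finset.mem_singleton, Prod.mk.injEq]
    constructor
    · rintro ⟨rfl | rfl, rfl | rfl, hpq⟩ <;> simp_all
    · rintro (⟨rfl, rfl⟩ | ⟨rfl, rfl⟩) <;> simp [h, h.symm]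
  rw [pairSum, hoffDiag, Finset.sum_pair (by simp [h])]

theorem muPlus_eq_muMinus_swap_iff (ap am : Fin n → ℝ) (aps ams apo amo : Fin n → Fin n → ℝ)
    (hsymp : ∀ j k, aps j k = aps k j) (hsymm : ∀ j k, ams j k = ams k j) :
    (∀ C D, Disjoint C D → muPlus ap aps apo C D = muMinus am ams amo D C) ↔
    ((∀ j, ap j = am j) ∧
     (∀ j k, j ≠ k → aps j k = ams j k) ∧
     (∀ j k, j ≠ k → apo j k = amo k j)) := by
  constructor
  · intro h
    have hsingle : ∀ j, ap j = am j := fun j => by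
      simpa [muPlus, muMinus, pairSum_singleton] using h {j} ∅ (Finset.disjoint_empty_right _)
    refine ⟨hsingle, fun j k hjk => ?_, fun j k hjk => ?_⟩
    · have hpair := h {j, k} ∅ (Finset.disjoint_empty_right _)
      simp only [muPlus, muMinus, pairSum_pair _ hjk, Finset.sum_pair hjk,
        Finset.sum_empty, add_zero, hsingle, hsymp k j, hsymm k j] at hpair
      linarith
    · have hcross := h {j} {k} (Finset.disjoint_singleton.mpr hjk)
      simpa [muPlus, muMinus, pairSum_singleton, hsingle] using hcross
  · rintro ⟨hsingle, hpair, hcross⟩ C D hCD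
    unfold muPlus muMinus
    rw [Finset.sum_congr rfl fun j _ => hsingle j, pairSum_congr hpair, Finset.sum_comm]
    congr 1
    exact Finset.sum_congr rfl fun k hk => Finset.sum_congr rfl fun j hj =>
      hcross j k (Finset.disjoint_left.mp hCD hj <| · ▸ hk)

end TwoAdditive

theorem stmt_12_general {n : ℕ}
    (ap am : Fin n → ℝ) (aps ams apo amo : Fin n → Fin n → ℝ)
    (hsymp : ∀ j k, aps j k = aps k j) (hsymm : ∀ j k, ams j k = ams k j) :
    (∀ x : Fin n → ℝ, (∀ j, x j ∈ Set.Icc (-1:ℝ) 1) →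
        ChB (muPlus ap aps apo) x = ChB (muMinus am ams amo) (-x)) ↔
    ((∀ j, ap j = am j) ∧
     (∀ j k, j ≠ k → aps j k = ams j k) ∧
     (∀ j k, j ≠ k → apo j k = amo k j)) := by
  simp only [ChB_neg]
  rw [ChB_eq_ChB_iff]
  exact muPlus_eq_muMinus_swap_iff ap am aps ams apo amo hsymp hsymm

theorem stmt_12 {n : ℕ} (hn : 1 ≤ n)
    (ap am : Fin n → ℝ) (aps ams apo amo : Fin n → Fin n → ℝ)
    (hap : ∀ j, 0 ≤ ap j) (ham : ∀ j, 0 ≤ am j)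
    (hsymp : ∀ j k, aps j k = aps k j) (hsymm : ∀ j k, ams j k = ams k j)
    (hapo : ∀ j k, j ≠ k → apo j k ≤ 0) (hamo : ∀ j k, j ≠ k → amo j k ≤ 0) :
    (∀ x : Fin n → ℝ, (∀ j, x j ∈ Set.Icc (-1:ℝ) 1) →
        ChB (muPlus ap aps apo) x = ChB (muMinus am ams amo) (-x)) ↔
    ((∀ j, ap j = am j) ∧
     (∀ j k, j ≠ k → aps j k = ams j k) ∧
     (∀ j k, j ≠ k → apo j k = amo k j)) :=
  stmt_12_general ap am aps ams apo amo hsymp hsymm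
end

section
/- Let μ⁻ be given by a 2-additive decomposition. Then μ⁻(C,D) ≤ μ⁻(C,D∪{j}) holds for all j ∈ J and all (C,D∪{j}) ∈ P(J) with j ∉ D if and only if a_j⁻ + Σ_{k∈D} a_{jk}⁻ + Σ_{k∈C} a⁻_{k|j} ≥ 0 for all j ∈ J and all (C,D∪{j}) ∈ P(J) with j ∉ D; indeed, μ⁻(C,D∪{j}) − μ⁻(C,D) = a_j⁻ + Σ_{k∈D} a_{jk}⁻ + Σ_{k∈C} a⁻_{k|j} for every such j, C, D. -/
namespace Finset

theorem sum_offDiag_insert {α M : Type*} [DecidableEq α] [AddCommMonoid M]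
    (f : α → α → M) {a : α} {s : Finset α} (ha : a ∉ s) :
    ∑ p ∈ (insert a s).offDiag, f p.1 p.2 =
      ∑ p ∈ s.offDiag, f p.1 p.2 + ∑ k ∈ s, (f a k + f k a) := by
  have hdisj₁ : Disjoint s.offDiag ({a} ×ˢ s) := by
    simp only [disjoint_left, mem_offDiag, mem_product, mem_singleton]
    rintro ⟨x, y⟩ ⟨hx, -⟩ ⟨rfl, -⟩
    exact ha hx
  have hdisj₂ : Disjoint (s.offDiag ∪ {a} ×ˢ s) (s ×ˢ {a}) := by
    simp only [disjoint_left, mem_union, mem_offDiag, mem_product, mem_singleton]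
    rintro ⟨x, y⟩ (⟨-, hy, -⟩ | ⟨-, hy⟩) ⟨-, rfl⟩ <;> exact ha hy
  rw [offDiag_insert ha, sum_union hdisj₂, sum_union hdisj₁, singleton_product,
    product_singleton, sum_map, sum_map, sum_add_distrib, add_assoc]
  rfl

end Finset

lemma pairSum_insert {n : ℕ} {a : Fin n → Fin n → ℝ} (hsym : ∀ j k, a j k = a k j)
    {j : Fin n} {D : Finset (Fin n)} (hj : j ∉ D) :
    pairSum a (insert j D) = pairSum a D + ∑ k ∈ D, a j k := by
  simp only [pairSum, Finset.sum_offDiag_insert a hj, ← hsym j, ← two_mul, ← Finset.mul_sum]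
  ring

lemma muMinus_insert_sub {n : ℕ} (am : Fin n → ℝ) {ams : Fin n → Fin n → ℝ}
    (amo : Fin n → Fin n → ℝ) (hsym : ∀ j k, ams j k = ams k j)
    {j : Fin n} (C : Finset (Fin n)) {D : Finset (Fin n)} (hj : j ∉ D) :
    muMinus am ams amo C (insert j D) - muMinus am ams amo C D =
      am j + ∑ k ∈ D, ams j k + ∑ k ∈ C, amo k j := by
  simp only [muMinus, pairSum_insert hsym hj, Finset.sum_insert hj, Finset.sum_add_distrib]
  ring

theorem stmt_15_general {n : ℕ}
    (am : Fin n → ℝ) (ams amo : Fin n → Fin n → ℝ)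
    (hsym : ∀ j k, ams j k = ams k j) :
    ((∀ (j : Fin n) (C D : Finset (Fin n)), j ∉ D → Disjoint C (insert j D) →
        muMinus am ams amo C D ≤ muMinus am ams amo C (insert j D)) ↔
      (∀ (j : Fin n) (C D : Finset (Fin n)), j ∉ D → Disjoint C (insert j D) →
        0 ≤ am j + ∑ k ∈ D, ams j k + ∑ k ∈ C, amo k j)) ∧
    (∀ (j : Fin n) (C D : Finset (Fin n)), j ∉ D → Disjoint C (insert j D) →
        muMinus am ams amo C (insert j D) - muMinus am ams amo C D =
          am j + ∑ k ∈ D, ams j k + ∑ k ∈ C, amo k j) := by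
  have increment (j : Fin n) (C D : Finset (Fin n)) (hj : j ∉ D) :=
    muMinus_insert_sub am amo hsym C hj
  refine ⟨forall_congr' fun j => forall₂_congr fun C D => forall_congr' fun hj => ?_,
    fun j C D hj _ => increment j C D hj⟩
  rw [← increment j C D hj, sub_nonneg]

theorem stmt_15 {n : ℕ} (hn : 1 ≤ n)
    (am : Fin n → ℝ) (ams amo : Fin n → Fin n → ℝ)
    (ham : ∀ j, 0 ≤ am j)
    (hsym : ∀ j k, ams j k = ams k j)
    (hamo : ∀ j k, j ≠ k → amo j k ≤ 0) :
    ((∀ (j : Fin n) (C D : Finset (Fin n)), j ∉ D → Disjoint C (insert j D) →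
        muMinus am ams amo C D ≤ muMinus am ams amo C (insert j D)) ↔
      (∀ (j : Fin n) (C D : Finset (Fin n)), j ∉ D → Disjoint C (insert j D) →
        0 ≤ am j + ∑ k ∈ D, ams j k + ∑ k ∈ C, amo k j)) ∧
    (∀ (j : Fin n) (C D : Finset (Fin n)), j ∉ D → Disjoint C (insert j D) →
        muMinus am ams amo C (insert j D) - muMinus am ams amo C D =
          am j + ∑ k ∈ D, ams j k + ∑ k ∈ C, amo k j) :=
  stmt_15_general am ams amo hsym
end

section
/- Let μ⁺, μ⁻ be given by a 2-additive decomposition in which a_{jk}⁺ = a_{jk}⁻ = 0 for all unordered pairs {j,k}, a⁺_{j|k} = a⁻_{j|k} = 0 for all ordered pairs (j,k) with j ≠ k, and a_j⁺ = a_j⁻ = w_j ≥ 0 for all j ∈ J, and let μ̂(C,D) = μ⁺(C,D) − μ⁻(C,D). Then for every x ∈ [−1,1]^n, Ch^B(x,μ̂) = Σ_{j∈J} w_j·x_j, i.e. the bipolar Choquet integral reduces to the weighted sum of the classical PROMETHEE method. -/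
/-!
With no interaction terms, `μ̂(C,D) = Σ_{j∈C} w_j - Σ_{j∈D} w_j`, so the integrand at level `t` is
`Σ_j w_j (𝟙[t < x_j] - 𝟙[x_j < -t])`. Since `|x_j| ≤ 1`, integrating the `j`-th term over `[0,1]`
gives `w_j (max x_j 0 - max (-x_j) 0) = w_j x_j`.
-/

lemma ite_lt_eq_indicator (a c : ℝ) :
    (fun t => if t < a then c else 0) = Set.indicator (Set.Iio a) (fun _ => c) := rfl

lemma intervalIntegrable_ite_lt (a c : ℝ) :
    IntervalIntegrable (fun t => if t < a then c else 0) MeasureTheory.volume 0 1 := by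
  rw [intervalIntegrable_iff, ite_lt_eq_indicator]
  exact (MeasureTheory.integrableOn_const (by simp)).indicator measurableSet_Iio

lemma integral_ite_lt_of_le_one (a c : ℝ) (ha : a ≤ 1) :
    ∫ t in (0:ℝ)..1, (if t < a then c else 0) = max a 0 * c := by
  rw [intervalIntegral.integral_of_le zero_le_one, ite_lt_eq_indicator,
    MeasureTheory.setIntegral_indicator measurableSet_Iio]
  have hset : Set.Ioc (0:ℝ) 1 ∩ Set.Iio a = Set.Ioo 0 a := by
    ext t
    simp only [Set.mem_inter_iff, Set.mem_Ioc, Set.mem_Ioo, Set.mem_Iio]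
    constructor
    · rintro ⟨⟨h0, -⟩, hta⟩; exact ⟨h0, hta⟩
    · rintro ⟨h0, hta⟩; exact ⟨⟨h0, hta.le.trans ha⟩, hta⟩
  rw [hset, MeasureTheory.setIntegral_const, Real.volume_real_Ioo, smul_eq_mul, sub_zero]

lemma ite_lt_neg_eq (a c : ℝ) :
    (fun t : ℝ => if a < -t then c else 0) = fun t => if t < -a then c else 0 := by
  simp_rw [lt_neg (a := a)]

lemma intervalIntegrable_ite_lt_sub_ite_lt_neg (a c : ℝ) :
    IntervalIntegrable (fun t => (if t < a then c else 0) - (if a < -t then c else 0))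
      MeasureTheory.volume 0 1 :=
  (intervalIntegrable_ite_lt a c).sub (ite_lt_neg_eq a c ▸ intervalIntegrable_ite_lt (-a) c)

lemma integral_ite_lt_sub_ite_lt_neg (a c : ℝ) (ha : a ∈ Set.Icc (-1:ℝ) 1) :
    ∫ t in (0:ℝ)..1, ((if t < a then c else 0) - (if a < -t then c else 0)) = c * a := by
  obtain ⟨hlo, hhi⟩ := ha
  simp_rw [lt_neg (a := a)]
  rw [intervalIntegral.integral_sub (intervalIntegrable_ite_lt _ _) (intervalIntegrable_ite_lt _ _),
    integral_ite_lt_of_le_one _ _ hhi, integral_ite_lt_of_le_one _ _ (neg_le.mp hlo)]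
  rcases le_total a 0 with h | h
  · rw [max_eq_right h, max_eq_left (neg_nonneg.mpr h)]; ring
  · rw [max_eq_left h, max_eq_right (neg_nonpos.mpr h)]; ring

theorem ChB_additive {n : ℕ} (w : Fin n → ℝ) (x : Fin n → ℝ)
    (hx : ∀ j, x j ∈ Set.Icc (-1:ℝ) 1) :
    ChB (fun C D => ∑ j ∈ C, w j - ∑ j ∈ D, w j) x = ∑ j, w j * x j := by
  have hsplit : ∀ t : ℝ,
      ∑ j ∈ Finset.univ.filter (fun j => t < x j), w j
        - ∑ j ∈ Finset.univ.filter (fun j => x j < -t), w j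
      = ∑ j, ((if t < x j then w j else 0) - (if x j < -t then w j else 0)) := by
    intro t
    rw [Finset.sum_filter, Finset.sum_filter, ← Finset.sum_sub_distrib]
  simp only [ChB, hsplit]
  rw [intervalIntegral.integral_finsetSum fun j _ =>
    intervalIntegrable_ite_lt_sub_ite_lt_neg (x j) (w j)]
  exact Finset.sum_congr rfl fun j _ => integral_ite_lt_sub_ite_lt_neg (x j) (w j) (hx j)

lemma muPlus_sub_muMinus_of_no_interaction {n : ℕ} (w : Fin n → ℝ) (C D : Finset (Fin n)) :
    muPlus w (fun _ _ => 0) (fun _ _ => 0) C D - muMinus w (fun _ _ => 0) (fun _ _ => 0) C D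
      = ∑ j ∈ C, w j - ∑ j ∈ D, w j := by
  simp [muPlus, muMinus, pairSum]

theorem stmt_18_general {n : ℕ}
    (w : Fin n → ℝ)
    (x : Fin n → ℝ) (hx : ∀ j, x j ∈ Set.Icc (-1:ℝ) 1) :
    ChB (fun C D => muPlus w (fun _ _ => 0) (fun _ _ => 0) C D
        - muMinus w (fun _ _ => 0) (fun _ _ => 0) C D) x =
      ∑ j, w j * x j := by
  simp only [muPlus_sub_muMinus_of_no_interaction]
  exact ChB_additive w x hx

theorem stmt_18 {n : ℕ} (hn : 1 ≤ n)
    (w : Fin n → ℝ) (hw : ∀ j, 0 ≤ w j)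
    (x : Fin n → ℝ) (hx : ∀ j, x j ∈ Set.Icc (-1:ℝ) 1) :
    ChB (fun C D => muPlus w (fun _ _ => 0) (fun _ _ => 0) C D
        - muMinus w (fun _ _ => 0) (fun _ _ => 0) C D) x =
      ∑ j, w j * x j :=
  stmt_18_general w x hx
end
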